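/- arXiv:2405.01375 — 2 statements merged into one kernel-verified Lean document; each statement's English description precedes it below -/
import Mathlib

section
/- The sequent ∀x. (A ⊗ B(x)) ⊢ A ⊗ ∀u. B(u) is not derivable in first-order intuitionistic linear logic (where A is a propositional atom and B a unary predicate). -/
set_option autoImplicit true

/-- First-order intuitionistic linear logic formulas over term domain `ℕ`,
with a nullary atom `atomA`, a unary atom `atomB`, tensor, universal
quantification (HOAS) and the exponential `!`. -/
inductive Fm : Type
  | atomA : Fm
  | atomB : ℕ → Fm
  | tensor : Fm → Fm → Fm
  | all : (ℕ → Fm) → Fm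
  | bang : Fm → Fm

/-- Sequent calculus for first-order intuitionistic linear logic:
`ILLDer Γ Δ F` means `Γ; Δ ⊢ F` with unrestricted context `Γ` and linear
context `Δ`. -/
inductive ILLDer : List Fm → Multiset Fm → Fm → Prop
  | ax : ILLDer Γ {F} F
  | tensorR : ILLDer Γ Δ₁ F → ILLDer Γ Δ₂ G → ILLDer Γ (Δ₁ + Δ₂) (Fm.tensor F G)
  | tensorL : ILLDer Γ (F ::ₘ G ::ₘ Δ) C → ILLDer Γ (Fm.tensor F G ::ₘ Δ) C
  | allR : (∀ t, ILLDer Γ Δ (N t)) → ILLDer Γ Δ (Fm.all N)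
  | allL : ILLDer Γ (N t ::ₘ Δ) C → ILLDer Γ (Fm.all N ::ₘ Δ) C
  | bangR : ILLDer Γ 0 F → ILLDer Γ 0 (Fm.bang F)
  | bangL : ILLDer (F :: Γ) Δ C → ILLDer Γ (Fm.bang F ::ₘ Δ) C
  | copy : F ∈ Γ → ILLDer Γ (F ::ₘ Δ) C → ILLDer Γ Δ C

/-!
Interpret formulas as subsets of an additive commutative monoid: `⊗` is the Minkowski sum, `∀` is
intersection and `!F` is `{0} ∩ F`. Every rule preserves "the sum of the interpretations of the
linear context lies in that of the goal, provided `0` lies in that of every unrestricted formula". In `ℤ` with `A = ℤ` and `B(n) = {n}`, the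
hypothesis `∀x. (A ⊗ B(x))` is interpreted as `ℤ`, while `A ⊗ ∀u. B(u)` is `ℤ + ∅ = ∅`.
-/

open scoped Pointwise

namespace Fm

variable {M : Type*} [AddCommMonoid M]

def interp (a : Set M) (b : ℕ → Set M) : Fm → Set M
  | atomA => a
  | atomB n => b n
  | tensor F G => interp a b F + interp a b G
  | all N => ⋂ t, interp a b (N t)
  | bang F => {0} ∩ interp a b F

end Fm

namespace ILLDer

variable {M : Type*} [AddCommMonoid M] {a : Set M} {b : ℕ → Set M}

theorem sum_map_interp_subset {Γ : List Fm} {Δ : Multiset Fm} {C : Fm} (h : ILLDer Γ Δ C)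
    (hΓ : ∀ F ∈ Γ, (0 : M) ∈ F.interp a b) :
    (Δ.map (Fm.interp a b)).sum ⊆ C.interp a b := by
  induction h with
  | ax => simp
  | tensorR _ _ ih₁ ih₂ =>
    simpa only [Multiset.map_add, Multiset.sum_add, Fm.interp] using
      Set.add_subset_add (ih₁ hΓ) (ih₂ hΓ)
  | tensorL _ ih =>
    simpa only [Multiset.map_cons, Multiset.sum_cons, Fm.interp, add_assoc] using ih hΓ
  | allR _ ih => exact Set.subset_iInter fun t => ih t hΓ
  | @allL _ N _ _ t _ ih =>
    simp only [Multiset.map_cons, Multiset.sum_cons, Fm.interp] at ih ⊢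
    exact (Set.add_subset_add_right (Set.iInter_subset (fun t => (N t).interp a b) t)).trans (ih hΓ)
  | bangR _ ih =>
    simpa [Fm.interp] using ih hΓ
  | bangL _ ih =>
    simp only [Multiset.map_cons, Multiset.sum_cons, Fm.interp]
    rintro _ ⟨x, ⟨rfl, h0⟩, y, hy, rfl⟩
    simpa using ih (List.forall_mem_cons.2 ⟨h0, hΓ⟩) hy
  | copy hF _ ih =>
    intro z hz
    simpa using ih hΓ (by simpa using Set.add_mem_add (hΓ _ hF) hz)

end ILLDer

/-- The sequent `∀x. (A ⊗ B(x)) ⊢ A ⊗ ∀u. B(u)` is not derivable in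
first-order intuitionistic linear logic. -/
theorem stmt0 :
    ¬ ILLDer [] {Fm.all fun x => Fm.tensor Fm.atomA (Fm.atomB x)}
        (Fm.tensor Fm.atomA (Fm.all fun u => Fm.atomB u)) := by
  intro h
  let I : Fm → Set ℤ := Fm.interp Set.univ fun n => {(n : ℤ)}
  have hhyp : 0 ∈ I (Fm.all fun x => Fm.tensor Fm.atomA (Fm.atomB x)) := by
    simpa [I, Fm.interp] using fun i : ℕ => ⟨-(i : ℤ), neg_add_cancel _⟩
  have hgoal : I (Fm.tensor Fm.atomA (Fm.all fun u => Fm.atomB u)) = ∅ := by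
    suffices ⋂ u : ℕ, ({(u : ℤ)} : Set ℤ) = ∅ by simp [I, Fm.interp, this]
    refine Set.eq_empty_of_forall_notMem fun z hz => ?_
    have h0 : z = 0 := by simpa using Set.mem_iInter.1 hz 0
    have h1 : z = 1 := by simpa using Set.mem_iInter.1 hz 1
    omega
  exact hgoal.subset (h.sum_map_interp_subset (by simp) (by simpa using hhyp))
end

section
/- The sequent ∀x. !A(x) ⊢ !∀u. A(u) is not derivable in first-order intuitionistic linear logic. -/
set_option autoImplicit true

/-!
Read a sequent built from the hypotheses `∀x. !A(x)`, `!A(t)`, `A(t)` as a claim about the atoms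
its contexts can supply: a goal `A(u)` needs `u` among them, a goal `∀u. A(u)` needs all of them.
The hypothesis `∀x. !A(x)` supplies every atom, but only from the linear context, and `!R`
requires that context to be empty. What is left is the unrestricted context, which only ever
receives atoms `A(t)` through `!L` and, being a list, supplies only finitely many.
-/

namespace Fm

def supply : Fm → Set ℕ
  | atomA => ∅
  | atomB t => {t}
  | tensor F G => F.supply ∪ G.supply
  | all N => ⋃ t, (N t).supply
  | bang F => F.supply

def ctxSupply (Γ : List Fm) (Δ : Multiset Fm) : Set ℕ :=
  (⋃ G ∈ Γ, G.supply) ∪ ⋃ F ∈ Δ, F.supply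

def Holds (S : Set ℕ) : Fm → Prop
  | atomB u => u ∈ S
  | all N => ∀ u, Holds S (N u)
  | _ => False -- the only banged goal is `!∀u. A(u)`, which no finite unrestricted context supports

theorem Holds.mono {S T : Set ℕ} (hST : S ⊆ T) : ∀ {C : Fm}, Holds S C → Holds T C
  | atomB _, h => hST h
  | all _, h => fun u => Holds.mono hST (h u)

def IsHyp (F : Fm) : Prop :=
  F = all (fun x => bang (atomB x)) ∨ ∃ t, F = atomB t ∨ F = bang (atomB t)

def IsGoal (C : Fm) : Prop :=
  C = bang (all atomB) ∨ C = all atomB ∨ ∃ u, C = atomB u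

@[simp]
theorem ctxSupply_cons_left (G : Fm) (Γ : List Fm) (Δ : Multiset Fm) :
    ctxSupply (G :: Γ) Δ = G.supply ∪ ctxSupply Γ Δ := by
  simp [ctxSupply, Set.union_assoc]

@[simp]
theorem ctxSupply_cons_right (Γ : List Fm) (F : Fm) (Δ : Multiset Fm) :
    ctxSupply Γ (F ::ₘ Δ) = F.supply ∪ ctxSupply Γ Δ := by
  simp only [ctxSupply, Multiset.mem_cons, Set.iUnion_iUnion_eq_or_left]
  rw [Set.union_left_comm]

theorem ctxSupply_finite {Γ : List Fm} (hΓ : ∀ G ∈ Γ, G.supply.Finite) :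
    (ctxSupply Γ 0).Finite :=
  (Γ.finite_toSet.biUnion hΓ).union (by simp)

end Fm

open Fm

theorem ILLDer.holds {Γ : List Fm} {Δ : Multiset Fm} {C : Fm} (h : ILLDer Γ Δ C)
    (hΓ : ∀ G ∈ Γ, ∃ t, G = atomB t) (hΔ : ∀ F ∈ Δ, IsHyp F) (hC : IsGoal C) :
    Holds (ctxSupply Γ Δ) C := by
  induction h with
  | @ax Γ F =>
    obtain ⟨u, rfl⟩ : ∃ u, F = atomB u := by
      rcases hC with rfl | rfl | hC
      · simp [IsHyp] at hΔ
      · simp [IsHyp, funext_iff] at hΔ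
      · exact hC
    simp [Holds, ctxSupply, supply]
  | tensorR => simp [IsGoal] at hC
  | tensorL => simp [IsHyp] at hΔ
  | allR _ ih =>
    obtain rfl : _ = atomB := by simpa [IsGoal] using hC
    exact fun t => ih t hΓ hΔ (by simp [IsGoal])
  | @allL Γ N Δ C t _ ih =>
    rw [Multiset.forall_mem_cons] at hΔ
    obtain rfl : N = fun x => bang (atomB x) := by simpa [IsHyp, funext_iff] using hΔ.1
    refine Holds.mono ?_ (ih hΓ (Multiset.forall_mem_cons.2 ⟨by simp [IsHyp], hΔ.2⟩) hC)
    simp only [ctxSupply_cons_right]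
    exact Set.union_subset_union_left _ (Set.subset_iUnion (fun x => supply (bang (atomB x))) t)
  | @bangR Γ F _ ih =>
    obtain rfl : F = all atomB := by simpa [IsGoal] using hC
    have hΓfin : ∀ G ∈ Γ, G.supply.Finite := fun G hG => by
      obtain ⟨t, rfl⟩ := hΓ G hG
      exact Set.finite_singleton t
    obtain ⟨u, hu⟩ := (ctxSupply_finite hΓfin).exists_notMem
    exact hu (ih hΓ (by simp) (by simp [IsGoal]) u)
  | @bangL F Γ Δ C _ ih =>
    rw [Multiset.forall_mem_cons] at hΔ
    obtain ⟨t, rfl⟩ : ∃ t, F = atomB t := by simpa [IsHyp] using hΔ.1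
    simpa [supply] using ih (by simpa using hΓ) hΔ.2 hC
  | @copy Γ F Δ C hF _ ih =>
    obtain ⟨s, rfl⟩ := hΓ F hF
    have hs : (atomB s).supply ⊆ ctxSupply Γ Δ :=
      Set.subset_union_of_subset_left (Set.subset_biUnion_of_mem (u := supply) hF) _
    simpa [Set.union_eq_self_of_subset_left hs] using
      ih hΓ (by simpa [IsHyp] using hΔ) hC

/-- The sequent `∀x. !A(x) ⊢ !∀u. A(u)` is not derivable in first-order
intuitionistic linear logic (here `atomB` plays the role of the unary
atom `A`). -/
theorem stmt2 :
    ¬ ILLDer [] {Fm.all fun x => Fm.bang (Fm.atomB x)}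
        (Fm.bang (Fm.all fun u => Fm.atomB u)) := fun h =>
  h.holds (by simp) (by simp [IsHyp]) (by simp [IsGoal])
end
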